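/- Under the stated assumptions, for every n with m \le n \le N one has, almost surely, E[J^{(m,N)} \mid \mathcal{F}_n] \ge J^{(m,n)} - ( \sum_{j \in A_n, \, n \le j \le N-1} j^{-(c\rho + \alpha)} E[|b_j| \mid \mathcal{F}_n] + \sum_{j \in B_n, \, n \le j \le N-1} j^{-\alpha} E[|b_j| \mid \mathcal{F}_n] ), where A_n = \{ j \ge n : j - c \log j \ge n \} and B_n = \{ j \ge n : j - c \log j < n \}. -/

import Mathlib

/-!
Split `J^{(m,N)} = J^{(m,n)} + ∑_{n ≤ j < N} a_j ω_j`. The first part is `ℱ_n`-measurable.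
For `j ∈ Bₙ` one only uses `|ω_j| ≤ 1`. For `j ∈ Aₙ` the coefficient `a_j` is measurable at the
time `k = ⌊j - c log j⌋ ≥ n`, so conditioning first on `ℱ_k` pulls `a_j` out and leaves
`E[ω_j | ℱ_k]`, of size at most `e^{-ρ(j-k)} ≤ j^{-cρ}`.
-/

open MeasureTheory Filter Finset

lemma Nat.floor_sub_mul_log_le {c : ℝ} (hc : 0 ≤ c) (j : ℕ) :
    ⌊(j : ℝ) - c * Real.log j⌋₊ ≤ j :=
  Nat.floor_le_of_le (by nlinarith [Real.log_natCast_nonneg j])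

lemma Nat.floor_sub_mul_log_lt {c : ℝ} (hc : 0 < c) {j : ℕ} (hj : 2 ≤ j)
    (h : 0 ≤ (j : ℝ) - c * Real.log j) : ⌊(j : ℝ) - c * Real.log j⌋₊ < j := by
  have hlog : 0 < Real.log j := Real.log_pos (by exact_mod_cast hj)
  rw [Nat.floor_lt h]
  nlinarith

lemma Real.exp_neg_mul_sub_le_rpow {ρ c j k : ℝ} (hρ : 0 ≤ ρ) (hj : 0 < j)
    (hk : k ≤ j - c * Real.log j) : Real.exp (-ρ * (j - k)) ≤ j ^ (-(c * ρ)) := by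
  rw [Real.rpow_def_of_pos hj, Real.exp_le_exp]
  nlinarith

section CondExp

variable {Ω : Type*} {m0 : MeasurableSpace Ω} {μ : Measure Ω}

theorem ae_neg_mul_condExp_le_condExp {m : MeasurableSpace Ω} {f g : Ω → ℝ} (ε : ℝ)
    (hf : Integrable f μ) (hg : Integrable g μ) (h : ∀ᵐ y ∂μ, -(ε * g y) ≤ f y) :
    ∀ᵐ x ∂μ, -(ε * μ[g | m] x) ≤ μ[f | m] x := by
  have hmono : μ[(-ε) • g | m] ≤ᵐ[μ] μ[f | m] :=
    condExp_mono (hg.smul (-ε)) hf (by filter_upwards [h] with y hy; simpa using hy)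
  filter_upwards [hmono, condExp_smul (-ε) g m] with x hx hsmul
  rwa [hsmul, Pi.smul_apply, smul_eq_mul, neg_mul] at hx

theorem ae_neg_mul_condExp_abs_le_condExp_mul [IsFiniteMeasure μ] {mn mk : MeasurableSpace Ω}
    (hnk : mn ≤ mk) (hk : mk ≤ m0) {g w : Ω → ℝ} {ε : ℝ} (hg : StronglyMeasurable[mk] g)
    (hg_int : Integrable g μ) (hw_int : Integrable w μ) (hgw_int : Integrable (g * w) μ)
    (hw : ∀ᵐ x ∂μ, |μ[w | mk] x| ≤ ε) :
    ∀ᵐ x ∂μ, -(ε * μ[fun y => |g y| | mn] x) ≤ μ[g * w | mn] x := by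
  have hlow : ∀ᵐ y ∂μ, -(ε * |g y|) ≤ μ[g * w | mk] y := by
    filter_upwards [condExp_mul_of_stronglyMeasurable_left hg hgw_int hw_int, hw]
      with y hpull hwy
    rw [hpull, Pi.mul_apply]
    refine le_trans ?_ (neg_abs_le _)
    rw [abs_mul, mul_comm]
    exact neg_le_neg (mul_le_mul_of_nonneg_left hwy (abs_nonneg _))
  filter_upwards [condExp_condExp_of_le (f := g * w) (μ := μ) hnk hk,
    ae_neg_mul_condExp_le_condExp ε integrable_condExp hg_int.abs hlow] with x htower hx
  rwa [htower] at hx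

theorem ae_neg_rpow_mul_condExp_abs_le_condExp_mul [IsFiniteMeasure μ] {ℱ : Filtration ℕ m0}
    {g w : Ω → ℝ} {ρ c : ℝ} (hρ : 0 ≤ ρ) (hc : 0 < c) {n j : ℕ} (hj : 2 ≤ j)
    (hA : (n : ℝ) ≤ (j : ℝ) - c * Real.log j)
    (hg : StronglyMeasurable[ℱ ⌊(j : ℝ) - c * Real.log j⌋₊] g) (hg_int : Integrable g μ)
    (hw_int : Integrable w μ) (hgw_int : Integrable (g * w) μ)
    (hcorr : ∀ k : ℕ, k < j →
      ∀ᵐ x ∂μ, |μ[w | ℱ k] x| ≤ Real.exp (-ρ * ((j : ℝ) - (k : ℝ)))) :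
    ∀ᵐ x ∂μ, -((j : ℝ) ^ (-(c * ρ)) * μ[fun y => |g y| | ℱ n] x) ≤ μ[g * w | ℱ n] x := by
  set k := ⌊(j : ℝ) - c * Real.log j⌋₊
  have hlag : 0 ≤ (j : ℝ) - c * Real.log j := (Nat.cast_nonneg n).trans hA
  have hdecay : ∀ᵐ x ∂μ, |μ[w | ℱ k] x| ≤ (j : ℝ) ^ (-(c * ρ)) := by
    filter_upwards [hcorr k (Nat.floor_sub_mul_log_lt hc hj hlag)] with x hx
    exact hx.trans (Real.exp_neg_mul_sub_le_rpow hρ (by positivity) (Nat.floor_le hlag))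
  exact ae_neg_mul_condExp_abs_le_condExp_mul (ℱ.mono (Nat.le_floor hA)) (ℱ.le k) hg hg_int
    hw_int hgw_int hdecay

theorem ae_neg_ite_le_condExp_mul_div_rpow [IsFiniteMeasure μ] {ℱ : Filtration ℕ m0}
    {g w : Ω → ℝ} {ρ c α : ℝ} (hρ : 0 ≤ ρ) (hc : 0 < c) {n j : ℕ} (hj : 2 ≤ j)
    (hg : StronglyMeasurable[ℱ ⌊(j : ℝ) - c * Real.log j⌋₊] g) (hg_int : Integrable g μ)
    (hw_int : Integrable w μ) (hw_bdd : ∀ᵐ x ∂μ, |w x| ≤ 1)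
    (hcorr : ∀ k : ℕ, k < j →
      ∀ᵐ x ∂μ, |μ[w | ℱ k] x| ≤ Real.exp (-ρ * ((j : ℝ) - (k : ℝ)))) :
    ∀ᵐ x ∂μ,
      -(if (n : ℝ) ≤ (j : ℝ) - c * Real.log j then
          μ[fun y => |g y| | ℱ n] x / (j : ℝ) ^ (c * ρ + α)
        else μ[fun y => |g y| | ℱ n] x / (j : ℝ) ^ α) ≤
        μ[fun y => g y * w y / (j : ℝ) ^ α | ℱ n] x := by
  have hj0 : (0 : ℝ) < j := by positivity
  have hgw_int : Integrable (g * w) μ :=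
    hg_int.mul_bdd hw_int.aestronglyMeasurable (by simpa only [Real.norm_eq_abs] using hw_bdd)
  have hscale : μ[fun y => g y * w y / (j : ℝ) ^ α | ℱ n] =ᵐ[μ]
      ((j : ℝ) ^ α)⁻¹ • μ[g * w | ℱ n] := by
    have hfun : (fun y => g y * w y / (j : ℝ) ^ α) = ((j : ℝ) ^ α)⁻¹ • (g * w) := by
      ext y; simp only [Pi.smul_apply, Pi.mul_apply, smul_eq_mul]; ring
    rw [hfun]
    exact condExp_smul _ _ _
  split_ifs with hA
  · filter_upwards [hscale, ae_neg_rpow_mul_condExp_abs_le_condExp_mul hρ hc hj hA hg hg_int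
      hw_int hgw_int hcorr] with x hx hbound
    rw [hx, Pi.smul_apply, smul_eq_mul]
    calc -(μ[fun y => |g y| | ℱ n] x / (j : ℝ) ^ (c * ρ + α))
        = ((j : ℝ) ^ α)⁻¹ * -((j : ℝ) ^ (-(c * ρ)) * μ[fun y => |g y| | ℱ n] x) := by
          rw [Real.rpow_add hj0, Real.rpow_neg hj0.le]; field_simp
      _ ≤ _ := mul_le_mul_of_nonneg_left hbound (by positivity)
  · have hlow : ∀ᵐ y ∂μ, -(1 * |g y|) ≤ (g * w) y := by
      filter_upwards [hw_bdd] with y hy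
      rw [one_mul, Pi.mul_apply]
      refine le_trans ?_ (neg_abs_le _)
      rw [abs_mul]
      exact neg_le_neg (mul_le_of_le_one_right (abs_nonneg _) hy)
    filter_upwards [hscale, ae_neg_mul_condExp_le_condExp 1 hgw_int hg_int.abs hlow]
      with x hx hbound
    rw [hx, Pi.smul_apply, smul_eq_mul]
    calc -(μ[fun y => |g y| | ℱ n] x / (j : ℝ) ^ α)
        = ((j : ℝ) ^ α)⁻¹ * -(1 * μ[fun y => |g y| | ℱ n] x) := by ring
      _ ≤ _ := mul_le_mul_of_nonneg_left hbound (by positivity)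

end CondExp

theorem stmt_4_general {Ω : Type*} {m0 : MeasurableSpace Ω} (μ : Measure Ω) [IsProbabilityMeasure μ]
    (ℱ : Filtration ℕ m0) (w : ℕ → Ω → ℝ)
    (hadapted : Adapted ℱ w)
    (hwbdd : ∀ j, ∀ᵐ x ∂μ, |w j x| ≤ 1)
    (ρ : ℝ) (hρ : 0 < ρ)
    (hcorr : ∀ k j : ℕ, k < j →
      ∀ᵐ x ∂μ, |(μ[w j | ℱ k]) x| ≤ Real.exp (-ρ * ((j : ℝ) - (k : ℝ))))
    (α c : ℝ) (hc : 0 < c)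
    (m N : ℕ) (hm : 2 ≤ m)
    (b : ℕ → Ω → ℝ)
    (hbint : ∀ j, Integrable (b j) μ)
    (hb : ∀ j : ℕ, StronglyMeasurable[ℱ ⌊(j : ℝ) - c * Real.log j⌋₊] (b j)) :
    ∀ n : ℕ, m ≤ n → n ≤ N →
      ∀ᵐ x ∂μ,
        (μ[fun y => ∑ j ∈ Finset.Ico m N, b j y * w j y / (j : ℝ) ^ α | ℱ n]) x ≥
          (∑ j ∈ Finset.Ico m n, b j x * w j x / (j : ℝ) ^ α) -
            ((∑ j ∈ (Finset.Ico n N).filter (fun j : ℕ => (n : ℝ) ≤ (j : ℝ) - c * Real.log j),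
                (μ[fun y => |b j y| | ℱ n]) x / (j : ℝ) ^ (c * ρ + α)) +
              ∑ j ∈ (Finset.Ico n N).filter (fun j : ℕ => (j : ℝ) - c * Real.log j < (n : ℝ)),
                (μ[fun y => |b j y| | ℱ n]) x / (j : ℝ) ^ α) := by
  intro n hn hnN
  have hw_int : ∀ j, Integrable (w j) μ := fun j =>
    (integrable_const (1 : ℝ)).mono' ((hadapted j).mono (ℱ.le j) le_rfl).aestronglyMeasurable
      (by simpa only [Real.norm_eq_abs] using hwbdd j)
  have hsummand_int : ∀ j, Integrable (fun y => b j y * w j y / (j : ℝ) ^ α) μ := fun j =>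
    ((hbint j).mul_bdd (hw_int j).aestronglyMeasurable
      (by simpa only [Real.norm_eq_abs] using hwbdd j)).div_const _
  have hpast : ∀ j ∈ Ico m n, μ[fun y => b j y * w j y / (j : ℝ) ^ α | ℱ n] =
      fun y => b j y * w j y / (j : ℝ) ^ α := by
    intro j hj
    have hjn : j ≤ n := (mem_Ico.1 hj).2.le
    have hb_n : Measurable[ℱ n] (b j) :=
      ((hb j).mono (ℱ.mono ((Nat.floor_sub_mul_log_le hc.le j).trans hjn))).measurable
    have hw_n : Measurable[ℱ n] (w j) := (hadapted j).mono (ℱ.mono hjn) le_rfl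
    exact condExp_of_stronglyMeasurable (ℱ.le n) ((hb_n.mul hw_n).div_const _).stronglyMeasurable
      (hsummand_int j)
  have hfuture := (eventually_all_finset (Ico n N)).2 fun j hj =>
    ae_neg_ite_le_condExp_mul_div_rpow (n := n) (α := α) hρ.le hc
      (hm.trans (hn.trans (mem_Ico.1 hj).1)) (hb j) (hbint j) (hw_int j) (hwbdd j)
      (fun k hk => hcorr k j hk)
  filter_upwards [condExp_finsetSum (fun j _ => hsummand_int j) (ℱ n) (s := Ico m N), hfuture]
    with x hsum hx
  simp only [Finset.sum_fn] at hsum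
  have hA_B := sum_le_sum hx
  rw [sum_neg_distrib, sum_ite] at hA_B
  simp only [not_le] at hA_B
  rw [ge_iff_le, hsum, ← sum_Ico_consecutive _ hn hnN,
    sum_congr rfl fun j hj => congrFun (hpast j hj) x]
  linarith

/-- Lower bound on the conditional expectation `E[J^{(m,N)} | ℱ_n]`:
`E[J^{(m,N)} | ℱ_n] ≥ J^{(m,n)} - (∑_{j ∈ Aₙ} j^{-(cρ+α)} E[|b_j| | ℱ_n]
  + ∑_{j ∈ Bₙ} j^{-α} E[|b_j| | ℱ_n])` a.s., where
`Aₙ = {j ≥ n : j - c log j ≥ n}` and `Bₙ = {j ≥ n : j - c log j < n}`. -/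
theorem stmt_4 {Ω : Type*} {m0 : MeasurableSpace Ω} (μ : Measure Ω) [IsProbabilityMeasure μ]
    (ℱ : Filtration ℕ m0) (w : ℕ → Ω → ℝ)
    (hadapted : Adapted ℱ w)
    (hwbdd : ∀ j, ∀ᵐ x ∂μ, |w j x| ≤ 1)
    (ρ : ℝ) (hρ : 0 < ρ)
    (hcorr : ∀ k j : ℕ, k < j →
      ∀ᵐ x ∂μ, |(μ[w j | ℱ k]) x| ≤ Real.exp (-ρ * ((j : ℝ) - (k : ℝ))))
    (α c : ℝ) (hα : 1 / 2 < α) (hc : 0 < c)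
    (m N : ℕ) (hm : 2 ≤ m) (hmN : m ≤ N)
    (hfloor : ∀ j : ℕ, m ≤ j → (1 : ℝ) ≤ (j : ℝ) - c * Real.log j)
    (b : ℕ → Ω → ℝ)
    (hbint : ∀ j, Integrable (b j) μ)
    (hb : ∀ j : ℕ, StronglyMeasurable[ℱ ⌊(j : ℝ) - c * Real.log j⌋₊] (b j)) :
    ∀ n : ℕ, m ≤ n → n ≤ N →
      ∀ᵐ x ∂μ,
        (μ[fun y => ∑ j ∈ Finset.Ico m N, b j y * w j y / (j : ℝ) ^ α | ℱ n]) x ≥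
          (∑ j ∈ Finset.Ico m n, b j x * w j x / (j : ℝ) ^ α) -
            ((∑ j ∈ (Finset.Ico n N).filter (fun j : ℕ => (n : ℝ) ≤ (j : ℝ) - c * Real.log j),
                (μ[fun y => |b j y| | ℱ n]) x / (j : ℝ) ^ (c * ρ + α)) +
              ∑ j ∈ (Finset.Ico n N).filter (fun j : ℕ => (j : ℝ) - c * Real.log j < (n : ℝ)),
                (μ[fun y => |b j y| | ℱ n]) x / (j : ℝ) ^ α) :=
  stmt_4_general μ ℱ w hadapted hwbdd ρ hρ hcorr α c hc m N hm b hbint hb
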